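/- Minimality check via single-element removals: for every network of timed automata A^n, lasso-shaped run ρ, MITL effect φ, and finite set of events C ⊆ E(A^n) that fulfills SAT and CF_BF, C is a but-for cause for φ in ρ of A^n if and only if for every event e ∈ C the set C \ {e} does not fulfill CF_BF. -/
import Mathlib


open scoped Classical

noncomputable section

/-! ### Basic real-time machinery -/

abbrev Time := NNReal
abbrev ClockVal (X : Type) := X → Time
abbrev Guard (X : Type) := Set (ClockVal X)
abbrev ClockUpdate (X : Type) := X → Option Time

/-- Apply a (partial, constant-valued) clock update to a clock valuation. -/
def applyUpdate {X : Type} (U : ClockUpdate X) (u : ClockVal X) : ClockVal X :=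
  fun x => (U x).getD (u x)

/-- Let `δ` time units pass in the clock valuation `u`. -/
def shiftVal {X : Type} (u : ClockVal X) (δ : Time) : ClockVal X :=
  fun x => u x + δ

/-- An edge of a timed automaton: source, guard, action, clock update, target. -/
structure TAEdge (Loc Act X : Type) where
  src : Loc
  guard : Guard X
  act : Act
  upd : ClockUpdate X
  dst : Loc

/-- A timed automaton with locations `Loc`, actions `Act`, clocks `X` and
atomic propositions `AP` (guards and invariants are taken semantically,
i.e. as sets of clock valuations). -/
structure TA (Loc Act X AP : Type) where
  init : Loc
  edges : Set (TAEdge Loc Act X)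
  inv : Loc → Guard X
  lbl : Loc → Set AP

/-- An (infinite) run of a timed automaton: an alternating sequence of delay and
action transitions starting in the initial location with all clocks zero.
Transition `t` leads from state `t` to state `t + 1`, first delaying `delay t`
and then performing action `act t` (so the paper's `1`-based index `i`
corresponds to our index `i - 1`). -/
structure TARun {Loc Act X AP : Type} (A : TA Loc Act X AP) where
  loc : ℕ → Loc
  clk : ℕ → ClockVal X
  delay : ℕ → Time
  act : ℕ → Act
  init_loc : loc 0 = A.init
  init_clk : clk 0 = fun _ => 0
  step : ∀ t, ∃ e ∈ A.edges, e.src = loc t ∧ e.act = act t ∧ e.dst = loc (t + 1) ∧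
    (∀ δ' ≤ delay t, shiftVal (clk t) δ' ∈ A.inv (loc t)) ∧
    shiftVal (clk t) (delay t) ∈ e.guard ∧
    clk (t + 1) = applyUpdate e.upd (shiftVal (clk t) (delay t)) ∧
    clk (t + 1) ∈ A.inv (loc (t + 1))

/-- A lasso-shaped run: after the loop start `start`, everything repeats with
period `len - start` (where `len` is the length `|ρ|` of the lasso, i.e. the
position right after the last transition of the loop). -/
structure LassoRun {Loc Act X AP : Type} (A : TA Loc Act X AP) extends TARun A where
  start : ℕ
  len : ℕ
  start_lt : start < len
  loop_loc : ∀ t, start ≤ t → loc (t + (len - start)) = loc t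
  loop_clk : ∀ t, start ≤ t → clk (t + (len - start)) = clk t
  loop_delay : ∀ t, start ≤ t → delay (t + (len - start)) = delay t
  loop_act : ∀ t, start ≤ t → act (t + (len - start)) = act t

/-- Accumulated delay before state `i`, i.e. `δ(0, i)`. -/
def cumDelay {Loc Act X AP : Type} {A : TA Loc Act X AP} (ρ : TARun A) : ℕ → Time
  | 0 => 0
  | t + 1 => cumDelay ρ t + ρ.delay t

abbrev TASignal (AP : Type) := Time → Set AP

/-- The signal of a run: `σ^ρ(t)` is the label of the location occupied at
global time `t` (left-closed right-open semantics). -/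
def TARun.signal {Loc Act X AP : Type} {A : TA Loc Act X AP} (ρ : TARun A) : TASignal AP :=
  fun t => {p | ∃ i, cumDelay ρ i ≤ t ∧ t < cumDelay ρ (i + 1) ∧ p ∈ A.lbl (ρ.loc i)}

/-- The language of a timed automaton: the set of signals of its runs. -/
def TA.lang {Loc Act X AP : Type} (A : TA Loc Act X AP) : Set (TASignal AP) :=
  {σ | ∃ ρ : TARun A, ρ.signal = σ}

/-! ### MITL -/

/-- A non-singleton interval with natural endpoints (possibly unbounded). -/
structure TimeInterval where
  lo : ℕ
  hi : WithTop ℕ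
  lo_open : Bool
  hi_open : Bool
  nonsingleton : (lo : WithTop ℕ) < hi

def TimeInterval.mem (I : TimeInterval) (t : Time) : Prop :=
  (if I.lo_open then (I.lo : Time) < t else (I.lo : Time) ≤ t) ∧
  (match I.hi with
    | ⊤ => True
    | (b : ℕ) => if I.hi_open then t < (b : Time) else t ≤ (b : Time))

/-- Metric Interval Temporal Logic. -/
inductive MITL (AP : Type) where
  | atom : AP → MITL AP
  | not : MITL AP → MITL AP
  | and : MITL AP → MITL AP → MITL AP
  | until : TimeInterval → MITL AP → MITL AP → MITL AP

/-- Satisfaction of an MITL formula by a signal at a time point. -/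
def MITL.sat {AP : Type} (σ : TASignal AP) : MITL AP → Time → Prop
  | .atom p, t => p ∈ σ t
  | .not φ, t => ¬ MITL.sat σ φ t
  | .and φ ψ, t => MITL.sat σ φ t ∧ MITL.sat σ ψ t
  | .until I φ ψ, t => ∃ t', t < t' ∧ I.mem (t' - t) ∧ MITL.sat σ ψ t' ∧
      ∀ t'', t < t'' → t'' < t' → MITL.sat σ φ t''

/-- A run satisfies an MITL formula iff its signal does at time `0`. -/
def TARun.sat {Loc Act X AP : Type} {A : TA Loc Act X AP} (ρ : TARun A) (φ : MITL AP) : Prop :=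
  MITL.sat ρ.signal φ 0

/-- A timed automaton satisfies an MITL formula iff all of its runs do. -/
def TA.sat {Loc Act X AP : Type} (A : TA Loc Act X AP) (φ : MITL AP) : Prop :=
  ∀ ρ : TARun A, ρ.sat φ

/-! ### Networks of timed automata -/

/-- Actions of a network: the action together with the (handles of the) two
participating component automata `⟨Ai, Aj, α⟩`. -/
abbrev NetAct (n : ℕ) (Act : Type) := Fin n × Fin n × Act

def participates {n : ℕ} {Act : Type} (i : Fin n) (a : NetAct n Act) : Prop :=
  i = a.1 ∨ i = a.2.1

/-- The original component action of a network action (`bar` is the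
complementation of synchronizing actions). -/
def actionOf {n : ℕ} {Act : Type} (bar : Act → Act) (i : Fin n) (a : NetAct n Act) : Act :=
  if i = a.1 then a.2.2 else bar a.2.2

/-- The network `A1 || … || An` obtained by parallel composition, with
internal and synchronized edges. -/
def Network {n : ℕ} {Loc Act X AP : Type} (A : Fin n → TA Loc Act X AP) (bar : Act → Act) :
    TA (Fin n → Loc) (NetAct n Act) X AP where
  init := fun i => (A i).init
  inv := fun q => {u | ∀ i, u ∈ (A i).inv (q i)}
  lbl := fun q => {p | ∃ i, p ∈ (A i).lbl (q i)}
  edges := {e |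
    (∃ i, ∃ e' ∈ (A i).edges, e.act = (i, i, e'.act) ∧
      e.guard = e'.guard ∧ e.upd = e'.upd ∧
      e.src i = e'.src ∧ e.dst i = e'.dst ∧ ∀ j, j ≠ i → e.dst j = e.src j) ∨
    (∃ i j, i ≠ j ∧ ∃ ei ∈ (A i).edges, ∃ ej ∈ (A j).edges,
      ej.act = bar ei.act ∧ e.act = (i, j, ei.act) ∧
      e.guard = ei.guard ∩ ej.guard ∧
      e.upd = (fun x => (ei.upd x).orElse fun _ => ej.upd x) ∧
      e.src i = ei.src ∧ e.src j = ej.src ∧ e.dst i = ei.dst ∧ e.dst j = ej.dst ∧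
      ∀ k, k ≠ i → k ≠ j → e.dst k = e.src k)}

/-! ### Local projections -/

/-- A (possibly finite) trace: a sequence of pairs of delays and actions. -/
abbrev TATrace (Act : Type) := ℕ → Option (Time × Act)

/-- `HasNth p k` says that the set `{t | p t}` has at least `k + 1` elements. -/
def HasNth (p : ℕ → Prop) (k : ℕ) : Prop :=
  {t | p t}.Infinite ∨ k < {t | p t}.ncard

/-- The local projection `ρ(Ai)` of a network run: the `k`-th action is the
component's own action at its `k`-th event point and the `k`-th delay is the
cumulative global delay since the previous event point of the component. -/
def localProj {n : ℕ} {L X AP Act : Type} {N : TA L (NetAct n Act) X AP} (bar : Act → Act)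
    (ρ : TARun N) (i : Fin n) : TATrace Act :=
  fun k =>
    let p : ℕ → Prop := fun t => participates i (ρ.act t)
    if HasNth p k then
      some (Prod.mk
        (∑ t ∈ Finset.Icc (if k = 0 then 0 else Nat.nth p (k - 1) + 1) (Nat.nth p k), ρ.delay t)
        (actionOf bar i (ρ.act (Nat.nth p k))))
    else none

/-- `localize(ρ, A^n)`: the tuple of all local projections. -/
def localize {n : ℕ} {L X AP Act : Type} {N : TA L (NetAct n Act) X AP} (bar : Act → Act)
    (ρ : TARun N) : Fin n → TATrace Act :=
  fun i => localProj bar ρ i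

/-- The sequence `locations(ρ, Ai)` of local locations of component `i`. -/
def locSeq {n : ℕ} {Loc X AP Act : Type} {N : TA (Fin n → Loc) (NetAct n Act) X AP}
    (ρ : TARun N) (i : Fin n) : ℕ → Loc :=
  fun k =>
    if k = 0 then ρ.loc 0 i
    else ρ.loc (Nat.nth (fun t => participates i (ρ.act t)) (k - 1) + 1) i

/-- The length `|ρ(Ai)|` of the local projection of a lasso-shaped run: the
number of event points of component `i` among the first `|ρ|` transitions. -/
def localLen {n : ℕ} {L X AP Act : Type} {N : TA L (NetAct n Act) X AP}
    (ρ : LassoRun N) (i : Fin n) : ℕ :=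
  ((Finset.range ρ.len).filter fun t => participates i (ρ.act t)).card

/-- The local loop start of the projection of a lasso-shaped run. -/
def localStart {n : ℕ} {L X AP Act : Type} {N : TA L (NetAct n Act) X AP}
    (ρ : LassoRun N) (i : Fin n) : ℕ :=
  ((Finset.range ρ.start).filter fun t => participates i (ρ.act t)).card

/-! ### Events -/

/-- An event is a delay event `(δ, i)` or an action event `(α, i)`
(indices are `1`-based, as in the paper). -/
abbrev TAEvent (Act : Type) := (Time ⊕ Act) × ℕ

/-- Events of a network: an event together with the component it refers to. -/
abbrev NetEvent (n : ℕ) (Act : Type) := TAEvent Act × Fin n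

/-- The events of a (lasso-shaped) trace, restricted to positions `1, …, len`. -/
def traceEvents {Act : Type} (π : TATrace Act) (len : ℕ) : Set (TAEvent Act) :=
  {ev | ∃ k < len, ∃ δ a, π k = some (δ, a) ∧ (ev = (Sum.inl δ, k + 1) ∨ ev = (Sum.inr a, k + 1))}

/-- `E_ρ`: the events on a lasso-shaped run of a network. -/
def runEvents {n : ℕ} {L X AP Act : Type} {N : TA L (NetAct n Act) X AP} (bar : Act → Act)
    (ρ : LassoRun N) : Set (NetEvent n Act) :=
  {ev | ev.1 ∈ traceEvents (localProj bar ρ.toTARun ev.2) (localLen ρ ev.2)}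

/-- `C|k`: the events of component `k` in a set of network events. -/
def restrictC {n : ℕ} {Act : Type} (C : Set (NetEvent n Act)) (i : Fin n) :
    Set (TAEvent Act) :=
  {e | (e, i) ∈ C}

/-! ### Counterfactual trace automata and contingency automata -/

/-- `dst` for (0-based) lasso positions: the successor position in the lasso. -/
def dstIdx (start len j : ℕ) : ℕ := if j + 1 < len then j + 1 else start

/-- The counterfactual trace automaton `A^C_π` of a lasso-shaped trace `π`
(with loop start `start` and length `len`) for the set of events `C`; `d` is
its (fresh) clock within the clock type `X`. -/
def CTA {Act X : Type} (AP : Type) (π : TATrace Act) (C : Set (TAEvent Act))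
    (start len : ℕ) (d : X) : TA ℕ Act X AP where
  init := 0
  lbl := fun _ => ∅
  inv := fun q => {u | ∀ δ a, q < len → π q = some (δ, a) → (Sum.inl δ, q + 1) ∉ C → u d ≤ δ}
  edges := {e | ∃ j < len, ∃ δ a, π j = some (δ, a) ∧
    e.src = j ∧ e.dst = dstIdx start len j ∧
    e.upd = (fun x => if x = d then some 0 else none) ∧
    (((Sum.inl δ, j + 1) ∈ C ∧ e.guard = Set.univ) ∨
      ((Sum.inl δ, j + 1) ∉ C ∧ e.guard = {u | u d = δ})) ∧
    ((Sum.inr a, j + 1) ∈ C ∨ e.act = a)}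

/-- Lift a timed automaton over clocks `X` to the larger clock set `X ⊕ K`. -/
def liftTA {Loc Act X AP : Type} (A : TA Loc Act X AP) (K : Type) :
    TA Loc Act (X ⊕ K) AP where
  init := A.init
  inv := fun q => {u | (fun x => u (Sum.inl x)) ∈ A.inv q}
  lbl := A.lbl
  edges := {e | ∃ e' ∈ A.edges, e.src = e'.src ∧ e.dst = e'.dst ∧ e.act = e'.act ∧
    e.guard = {u | (fun x => u (Sum.inl x)) ∈ e'.guard} ∧
    e.upd = fun x => match x with | Sum.inl y => e'.upd y | Sum.inr _ => none}

/-- Intersection of two timed automata over the same clocks and actions,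
synchronizing on actions; the labels are taken from the first operand. -/
def interS {L1 L2 Act X AP AP2 : Type} (A : TA L1 Act X AP) (B : TA L2 Act X AP2) :
    TA (L1 × L2) Act X AP where
  init := (A.init, B.init)
  inv := fun q => A.inv q.1 ∩ B.inv q.2
  lbl := fun q => A.lbl q.1
  edges := {e | ∃ ea ∈ A.edges, ∃ eb ∈ B.edges, ea.act = e.act ∧ eb.act = e.act ∧
    e.src = (ea.src, eb.src) ∧ e.dst = (ea.dst, eb.dst) ∧
    e.guard = ea.guard ∩ eb.guard ∧
    e.upd = fun x => (ea.upd x).orElse fun _ => eb.upd x}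

/-- The location contingency automaton of an automaton, given the sequence of
locations of the original run and the (local) loop data. -/
def locContingency {Loc Act X AP : Type} (A : TA Loc Act X AP) (seq : ℕ → Loc)
    (start len : ℕ) : TA (Loc × ℕ) Act X AP where
  init := (A.init, 0)
  inv := fun q => A.inv q.1
  lbl := fun q => A.lbl q.1
  edges := {e | ∃ e' ∈ A.edges, ∃ j < len, e.src = (e'.src, j) ∧
    e.guard = e'.guard ∧ e.act = e'.act ∧ e.upd = e'.upd ∧
    (e.dst = (e'.dst, dstIdx start len j) ∨
      e.dst = (seq (dstIdx start len j), dstIdx start len j))}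

/-- The clock contingency automaton of an automaton, given the clock resets
corresponding to the original run and the loop data. -/
def clkContingency {Loc Act X AP : Type} (A : TA Loc Act X AP) (reset : ℕ → ClockUpdate X)
    (start len : ℕ) : TA (Loc × ℕ) Act X AP where
  init := (A.init, 0)
  inv := fun q => A.inv q.1
  lbl := fun q => A.lbl q.1
  edges := {e | ∃ e' ∈ A.edges, ∃ j < len, e.src = (e'.src, j) ∧
    e.guard = e'.guard ∧ e.act = e'.act ∧ e.dst = (e'.dst, dstIdx start len j) ∧
    (e.upd = e'.upd ∨ e.upd = reset (dstIdx start len j))}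

/-! ### Counterfactual networks and causes -/

/-- The counterfactual network
`(A1 ∩ A^{C|1}_{ρ(A1)}) || … || (An ∩ A^{C|n}_{ρ(An)})`, where each
counterfactual trace automaton gets its own fresh clock `Sum.inr i`. -/
def cfNetwork {n : ℕ} {Loc Act X AP : Type} (A : Fin n → TA Loc Act X AP) (bar : Act → Act)
    (ρ : LassoRun (Network A bar)) (C : Set (NetEvent n Act)) :
    TA (Fin n → Loc × ℕ) (NetAct n Act) (X ⊕ Fin n) AP :=
  Network (fun i =>
    interS (liftTA (A i) (Fin n))
      (CTA AP (localProj bar ρ.toTARun i) (restrictC C i)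
        (localStart ρ i) (localLen ρ i) (Sum.inr i))) bar

/-- The counterfactual network with contingencies
`((A1^{loc(ρ)} ∩ A^{C|1}_{ρ(A1)}) || … || (An^{loc(ρ)} ∩ A^{C|n}_{ρ(An)}))^{clk(ρ)}`. -/
def cfActNetwork {n : ℕ} {Loc Act X AP : Type} (A : Fin n → TA Loc Act X AP) (bar : Act → Act)
    (ρ : LassoRun (Network A bar)) (C : Set (NetEvent n Act)) :
    TA ((Fin n → (Loc × ℕ) × ℕ) × ℕ) (NetAct n Act) (X ⊕ Fin n) AP :=
  clkContingency
    (Network (fun i =>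
      interS
        (liftTA (locContingency (A i) (locSeq ρ.toTARun i) (localStart ρ i) (localLen ρ i))
          (Fin n))
        (CTA AP (localProj bar ρ.toTARun i) (restrictC C i)
          (localStart ρ i) (localLen ρ i) (Sum.inr i))) bar)
    (fun j x => match x with | Sum.inl y => some (ρ.clk j y) | Sum.inr _ => none)
    ρ.start ρ.len

/-- `SAT`: cause and effect are satisfied by the actual run. -/
def SATcond {n : ℕ} {Loc Act X AP : Type} {A : Fin n → TA Loc Act X AP} (bar : Act → Act)
    (ρ : LassoRun (Network A bar)) (φ : MITL AP) (C : Set (NetEvent n Act)) : Prop :=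
  C ⊆ runEvents bar ρ ∧ ρ.toTARun.sat φ

/-- `CF_BF`: some intervention on the events in `C` avoids the effect. -/
def CFBF {n : ℕ} {Loc Act X AP : Type} (A : Fin n → TA Loc Act X AP) (bar : Act → Act)
    (ρ : LassoRun (Network A bar)) (φ : MITL AP) (C : Set (NetEvent n Act)) : Prop :=
  ¬ (cfNetwork A bar ρ C).sat φ

/-- `CF_Act`: some intervention together with location and clock contingencies
avoids the effect. -/
def CFAct {n : ℕ} {Loc Act X AP : Type} (A : Fin n → TA Loc Act X AP) (bar : Act → Act)
    (ρ : LassoRun (Network A bar)) (φ : MITL AP) (C : Set (NetEvent n Act)) : Prop :=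
  ¬ (cfActNetwork A bar ρ C).sat φ

/-- But-for cause: a finite set of events satisfying SAT, CF_BF and MIN. -/
def IsButForCause {n : ℕ} {Loc Act X AP : Type} (A : Fin n → TA Loc Act X AP) (bar : Act → Act)
    (ρ : LassoRun (Network A bar)) (φ : MITL AP) (C : Set (NetEvent n Act)) : Prop :=
  C.Finite ∧ SATcond bar ρ φ C ∧ CFBF A bar ρ φ C ∧
    ∀ C' ⊂ C, ¬ (SATcond bar ρ φ C' ∧ CFBF A bar ρ φ C')

/-- Actual cause: a finite set of events satisfying SAT, CF_Act and MIN. -/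
def IsActualCause {n : ℕ} {Loc Act X AP : Type} (A : Fin n → TA Loc Act X AP) (bar : Act → Act)
    (ρ : LassoRun (Network A bar)) (φ : MITL AP) (C : Set (NetEvent n Act)) : Prop :=
  C.Finite ∧ SATcond bar ρ φ C ∧ CFAct A bar ρ φ C ∧
    ∀ C' ⊂ C, ¬ (SATcond bar ρ φ C' ∧ CFAct A bar ρ φ C')

end

noncomputable section AuxCause

/-- CTA invariants are monotone in `C`. -/
lemma CTA_inv_mono {Act X AP : Type} (π : TATrace Act) {C C' : Set (TAEvent Act)}
    (h : C ⊆ C') (start len : ℕ) (d : X) (q : ℕ) :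
    (CTA AP π C start len d).inv q ⊆ (CTA AP π C' start len d).inv q := by
  intro u hu δ a hq hπ hC'
  exact hu δ a hq hπ fun hc => hC' (h hc)

/-- CTA edges are monotone in `C` up to enlarging the guard. -/
lemma CTA_edge_mono {Act X AP : Type} (π : TATrace Act) {C C' : Set (TAEvent Act)}
    (h : C ⊆ C') (start len : ℕ) (d : X) {e : TAEdge ℕ Act X}
    (he : e ∈ (CTA AP π C start len d).edges) :
    ∃ g : Guard X, e.guard ⊆ g ∧
      (⟨e.src, g, e.act, e.upd, e.dst⟩ : TAEdge ℕ Act X) ∈ (CTA AP π C' start len d).edges := by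
  obtain ⟨j, hj, δ, a, hπ, hsrc, hdst, hupd, hg, ha⟩ := he
  by_cases hc : (Sum.inl δ, j + 1) ∈ C'
  · exact ⟨Set.univ, Set.subset_univ _, j, hj, δ, a, hπ, hsrc, hdst, hupd,
      Or.inl ⟨hc, rfl⟩, Or.imp_left (fun x => h x) ha⟩
  · have hcC : (Sum.inl δ, j + 1) ∉ C := fun hx => hc (h hx)
    rcases hg with ⟨hmem, _⟩ | ⟨_, hg⟩
    · exact absurd hmem hcC
    · exact ⟨e.guard, subset_rfl, j, hj, δ, a, hπ, hsrc, hdst, hupd,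
        Or.inr ⟨hc, hg⟩, Or.imp_left (fun x => h x) ha⟩

/-- Component (interS with CTA) edges are monotone in `C` up to enlarging the guard. -/
lemma comp_edge_mono {L1 Act Y AP AP2 : Type} (B : TA L1 Act Y AP) (π : TATrace Act)
    {C C' : Set (TAEvent Act)} (h : C ⊆ C') (start len : ℕ) (d : Y)
    {e : TAEdge (L1 × ℕ) Act Y} (he : e ∈ (interS B (CTA AP2 π C start len d)).edges) :
    ∃ g : Guard Y, e.guard ⊆ g ∧
      (⟨e.src, g, e.act, e.upd, e.dst⟩ : TAEdge (L1 × ℕ) Act Y) ∈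
        (interS B (CTA AP2 π C' start len d)).edges := by
  obtain ⟨ea, hea, eb, heb, hacta, hactb, hsrc, hdst, hg, hupd⟩ := he
  obtain ⟨gb, hsub, heb'⟩ := CTA_edge_mono π h start len d heb
  refine ⟨ea.guard ∩ gb, ?_, ea, hea, ⟨eb.src, gb, eb.act, eb.upd, eb.dst⟩, heb',
    hacta, hactb, hsrc, hdst, rfl, hupd⟩
  rw [hg]; exact Set.inter_subset_inter_right _ hsub

/-- Edges of the counterfactual network are monotone in `C` up to the guard. -/
lemma cfNetwork_edge_mono {n : ℕ} {Loc Act X AP : Type} (A : Fin n → TA Loc Act X AP)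
    (bar : Act → Act) (ρ : LassoRun (Network A bar)) {C C' : Set (NetEvent n Act)}
    (h : C ⊆ C') {e : TAEdge (Fin n → Loc × ℕ) (NetAct n Act) (X ⊕ Fin n)}
    (he : e ∈ (cfNetwork A bar ρ C).edges) :
    ∃ g, e.guard ⊆ g ∧
      (⟨e.src, g, e.act, e.upd, e.dst⟩ :
        TAEdge (Fin n → Loc × ℕ) (NetAct n Act) (X ⊕ Fin n)) ∈
        (cfNetwork A bar ρ C').edges := by
  have hres : ∀ i : Fin n, restrictC C i ⊆ restrictC C' i := fun i x hx => h hx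
  rcases he with ⟨i, e', he', hact, hg, hupd, hsrc, hdst, hoth⟩ |
      ⟨i, j, hij, ei, hei, ej, hej, hbar, hact, hg, hupd, hsi, hsj, hdi, hdj, hoth⟩
  · obtain ⟨g, hsub, he''⟩ := comp_edge_mono _ _ (hres i) _ _ _ he'
    refine ⟨g, by rw [hg]; exact hsub,
      Or.inl ⟨i, ⟨e'.src, g, e'.act, e'.upd, e'.dst⟩, he'', hact, rfl, hupd, hsrc, hdst, hoth⟩⟩
  · 
    obtain ⟨gi, hsubi, hei'⟩ := comp_edge_mono _ _ (hres i) _ _ _ hei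
    obtain ⟨gj, hsubj, hej'⟩ := comp_edge_mono _ _ (hres j) _ _ _ hej
    refine ⟨gi ∩ gj, by rw [hg]; exact Set.inter_subset_inter hsubi hsubj,
      Or.inr ⟨i, j, hij, ⟨ei.src, gi, ei.act, ei.upd, ei.dst⟩, hei',
        ⟨ej.src, gj, ej.act, ej.upd, ej.dst⟩, hej', hbar, hact, rfl, hupd,
        hsi, hsj, hdi, hdj, hoth⟩⟩

/-- Invariants of the counterfactual network are monotone in `C`. -/
lemma cfNetwork_inv_mono {n : ℕ} {Loc Act X AP : Type} (A : Fin n → TA Loc Act X AP)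
    (bar : Act → Act) (ρ : LassoRun (Network A bar)) {C C' : Set (NetEvent n Act)}
    (h : C ⊆ C') (q : Fin n → Loc × ℕ) :
    (cfNetwork A bar ρ C).inv q ⊆ (cfNetwork A bar ρ C').inv q := by
  intro u hu i
  have hres : restrictC C i ⊆ restrictC C' i := fun x hx => h hx
  exact ⟨(hu i).1, CTA_inv_mono _ hres _ _ _ _ (hu i).2⟩

/-- Transfer a run of the counterfactual network for `C` to one for `C' ⊇ C`. -/
def cfRun_mono {n : ℕ} {Loc Act X AP : Type} (A : Fin n → TA Loc Act X AP)
    (bar : Act → Act) (ρ : LassoRun (Network A bar)) {C C' : Set (NetEvent n Act)}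
    (h : C ⊆ C') (σ : TARun (cfNetwork A bar ρ C)) : TARun (cfNetwork A bar ρ C') where
  loc := σ.loc
  clk := σ.clk
  delay := σ.delay
  act := σ.act
  init_loc := σ.init_loc
  init_clk := σ.init_clk
  step := by
    intro t
    obtain ⟨e, he, hsrc, hact, hdst, hinv, hgrd, hclk, hinv'⟩ := σ.step t
    obtain ⟨g, hsub, he'⟩ := cfNetwork_edge_mono A bar ρ h he
    exact ⟨_, he', hsrc, hact, hdst,
      fun δ' hδ => cfNetwork_inv_mono A bar ρ h _ (hinv δ' hδ),
      hsub hgrd, hclk, cfNetwork_inv_mono A bar ρ h _ hinv'⟩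

lemma cfRun_mono_signal {n : ℕ} {Loc Act X AP : Type} (A : Fin n → TA Loc Act X AP)
    (bar : Act → Act) (ρ : LassoRun (Network A bar)) {C C' : Set (NetEvent n Act)}
    (h : C ⊆ C') (σ : TARun (cfNetwork A bar ρ C)) :
    (cfRun_mono A bar ρ h σ).signal = σ.signal := by
  have hcum : ∀ i, cumDelay (cfRun_mono A bar ρ h σ) i = cumDelay σ i := by
    intro i
    induction i with
    | zero => rfl
    | succ i ih => simp [cumDelay, ih]; rfl
  funext t
  simp only [TARun.signal, hcum]
  rfl

/-- Monotonicity of `CF_BF`. -/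
lemma CFBF_mono {n : ℕ} {Loc Act X AP : Type} (A : Fin n → TA Loc Act X AP)
    (bar : Act → Act) (ρ : LassoRun (Network A bar)) (φ : MITL AP)
    {C C' : Set (NetEvent n Act)} (h : C ⊆ C') (hC : CFBF A bar ρ φ C) :
    CFBF A bar ρ φ C' := by
  intro hsat
  apply hC
  intro σ
  have := hsat (cfRun_mono A bar ρ h σ)
  unfold TARun.sat at this ⊢
  rwa [cfRun_mono_signal] at this

end AuxCause

/-- minimality check via single-element removals: a finite `C`
fulfilling SAT and CF_BF is a but-for cause iff no single-element removal
still fulfills CF_BF. -/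
theorem butfor_iff_single_removals {n : ℕ} {Loc Act X AP : Type}
    [Finite Loc] [Finite Act] [Finite X] [Finite AP]
    (A : Fin n → TA Loc Act X AP) (bar : Act → Act)
    (ρ : LassoRun (Network A bar)) (φ : MITL AP)
    (C : Set (NetEvent n Act)) (hfin : C.Finite)
    (hSAT : SATcond bar ρ φ C) (hCF : CFBF A bar ρ φ C) :
    IsButForCause A bar ρ φ C ↔ ∀ e ∈ C, ¬ CFBF A bar ρ φ (C \ {e}) := by
  constructor
  · rintro ⟨-, -, -, hmin⟩ e he hCFe
    exact hmin (C \ {e}) (Set.sdiff_singleton_ssubset.mpr he)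
      ⟨⟨Set.diff_subset.trans hSAT.1, hSAT.2⟩, hCFe⟩
  · intro h
    refine ⟨hfin, hSAT, hCF, ?_⟩
    rintro C' hC' ⟨hS', hCF'⟩
    obtain ⟨e, heC, heC'⟩ := Set.exists_of_ssubset hC'
    exact h e heC (CFBF_mono A bar ρ φ (Set.subset_diff_singleton hC'.1 heC') hCF')
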